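/- If F and G are nonzero polynomials in two variables over a field k with no common (non-unit) factor, then the set of common zeros V(F) ∩ V(G) = {(x,y) ∈ k² : F(x,y) = 0 and G(x,y) = 0} is finite. -/

import Mathlib

/-!
Regard `F` and `G` as polynomials in `X₀` over the UFD `k[X₁]`. By Gauss's lemma they stay
coprime over the field of fractions `k(X₁)`, where a Bézout identity holds; clearing denominators
gives `u * F + v * G = r(X₁)` with `r ≠ 0`, so the second coordinate of a common zero is a root
of `r`. Exchanging the variables bounds the first coordinate in the same way.
-/

open IsLocalization
open scoped nonZeroDivisors

namespace Polynomial

variable {R K : Type*} [CommRing R] [IsDomain R] [Field K] [Algebra R K] [IsFractionRing R K]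

theorem map_primPart_integerNormalization_dvd [NormalizedGCDMonoid R] (p : K[X]) :
    (integerNormalization R⁰ p).primPart.map (algebraMap R K) ∣ p := by
  obtain ⟨s, hs, hmap⟩ := integerNormalization_spec R⁰ p
  have hs_unit : IsUnit (C (algebraMap R K s)) :=
    isUnit_C.2 (IsFractionRing.to_map_ne_zero_of_mem_nonZeroDivisors hs).isUnit
  rw [← hs_unit.dvd_mul_left, ← smul_eq_C_mul, algebraMap_smul, ← hmap]
  exact Polynomial.map_dvd _ (primPart_dvd _)

theorem isCoprime_map_of_isRelPrime [IsGCDMonoid R] {f g : R[X]} (h : IsRelPrime f g) :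
    IsCoprime (f.map (algebraMap R K)) (g.map (algebraMap R K)) := by
  let := Classical.arbitrary (NormalizedGCDMonoid R)
  have hinj := map_injective (algebraMap R K) (IsFractionRing.injective R K)
  rw [← isRelPrime_iff_isCoprime]
  intro d hdf hdg
  have hd : d ≠ 0 := by
    rintro rfl
    rw [zero_dvd_iff, ← Polynomial.map_zero (algebraMap R K)] at hdf hdg
    exact not_isRelPrime_zero_zero (hinj hdf ▸ hinj hdg ▸ h)
  -- By Gauss's lemma, the primitive lift of `d` divides in `R[X]` whatever `d` divides in `K[X]`.
  have hlift : ∀ q : R[X], d ∣ q.map (algebraMap R K) → (integerNormalization R⁰ d).primPart ∣ q :=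
    fun q hq ↦ (isPrimitive_primPart _).dvd_of_fraction_map_dvd_fraction_map
      ((map_primPart_integerNormalization_dvd d).trans hq)
  exact isUnit_or_eq_zero_of_isUnit_integerNormalization_primPart hd (h (hlift f hdf) (hlift g hdg))

theorem exists_mul_add_mul_eq_C_of_isRelPrime [IsGCDMonoid R] {f g : R[X]} (h : IsRelPrime f g) :
    ∃ r ≠ 0, ∃ u v : R[X], u * f + v * g = C r := by
  obtain ⟨a, b, hab⟩ := isCoprime_map_of_isRelPrime (K := FractionRing R) h
  obtain ⟨s, hs, ha⟩ := integerNormalization_spec R⁰ a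
  obtain ⟨t, ht, hb⟩ := integerNormalization_spec R⁰ b
  refine ⟨s * t, mul_ne_zero (nonZeroDivisors.ne_zero hs) (nonZeroDivisors.ne_zero ht),
    C t * integerNormalization R⁰ a, C s * integerNormalization R⁰ b, ?_⟩
  apply map_injective (algebraMap R (FractionRing R)) (IsFractionRing.injective R _)
  rw [Polynomial.map_add, Polynomial.map_mul, Polynomial.map_mul, ha, Polynomial.map_mul,
    Polynomial.map_mul, hb]
  simp only [Algebra.smul_def, Polynomial.algebraMap_apply, Polynomial.map_mul, map_C, map_mul]
  linear_combination (C (algebraMap R (FractionRing R) s) * C (algebraMap R (FractionRing R) t)) * hab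

end Polynomial

namespace MvPolynomial

theorem eval_rename_swap_fin_two {R : Type*} [CommSemiring R] (x y : R)
    (P : MvPolynomial (Fin 2) R) : eval ![y, x] (rename (Equiv.swap 0 1) P) = eval ![x, y] P := by
  have : ![y, x] ∘ Equiv.swap 0 1 = ![x, y] := by
    ext i
    fin_cases i <;> rfl
  rw [eval_rename, this]

variable {R : Type*} [CommRing R] [IsDomain R]

theorem finite_setOf_eval_const_eq_zero {σ : Type*} [Unique σ] {r : MvPolynomial σ R}
    (hr : r ≠ 0) : {y : R | eval (fun _ ↦ y) r = 0}.Finite := by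
  have hp : uniqueAlgEquiv R σ r ≠ 0 := (map_ne_zero_iff _ (uniqueAlgEquiv R σ).injective).2 hr
  exact (Polynomial.finite_setOfPred_isRoot hp).subset fun y hy ↦
    (eval₂_uniqueAlgEquiv (φ := RingHom.id R) (a := fun _ ↦ y)).trans hy

variable [UniqueFactorizationMonoid R]

theorem exists_ne_zero_eval_eq_zero_of_isRelPrime {n : ℕ} {F G : MvPolynomial (Fin (n + 1)) R}
    (h : IsRelPrime F G) :
    ∃ r : MvPolynomial (Fin n) R, r ≠ 0 ∧ ∀ (x : R) (s : Fin n → R),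
      eval (Fin.cons x s) F = 0 → eval (Fin.cons x s) G = 0 → eval s r = 0 := by
  have h' : IsRelPrime (finSuccEquiv R n F) (finSuccEquiv R n G) :=
    IsRelPrime.of_map (finSuccEquiv R n).symm (by simpa using h)
  obtain ⟨r, hr, u, v, huv⟩ := Polynomial.exists_mul_add_mul_eq_C_of_isRelPrime h'
  refine ⟨r, hr, fun x s hF hG ↦ ?_⟩
  have := congrArg (fun p ↦ (p.map (eval s)).eval x) huv
  simpa [← eval_eq_eval_mv_eval', hF, hG] using this.symm

theorem finite_setOf_exists_eval_eq_zero_of_isRelPrime {F G : MvPolynomial (Fin 2) R}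
    (h : IsRelPrime F G) : {y : R | ∃ x, eval ![x, y] F = 0 ∧ eval ![x, y] G = 0}.Finite := by
  obtain ⟨r, hr, hvanish⟩ := exists_ne_zero_eval_eq_zero_of_isRelPrime h
  refine (finite_setOf_eval_const_eq_zero hr).subset fun y ⟨x, hF, hG⟩ ↦ ?_
  simpa [Matrix.cons_fin_one] using hvanish x ![y] hF hG

end MvPolynomial

open MvPolynomial Set

theorem coprime_polynomials_finite_common_zeros_general {k : Type*} [Field k]
    (F G : MvPolynomial (Fin 2) k)
    (hcop : ∀ d : MvPolynomial (Fin 2) k, d ∣ F → d ∣ G → IsUnit d) :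
    {p : k × k | eval ![p.1, p.2] F = 0 ∧ eval ![p.1, p.2] G = 0}.Finite := by
  let swap := renameEquiv k (Equiv.swap (0 : Fin 2) 1)
  have hcop_swap : IsRelPrime (swap F) (swap G) :=
    .of_map swap.symm (by rw [swap.symm_apply_apply, swap.symm_apply_apply]; exact hcop)
  refine ((finite_setOf_exists_eval_eq_zero_of_isRelPrime hcop_swap).prod
    (finite_setOf_exists_eval_eq_zero_of_isRelPrime hcop)).subset ?_
  rintro ⟨x, y⟩ ⟨hF, hG⟩
  exact ⟨⟨y, (eval_rename_swap_fin_two x y F).trans hF, (eval_rename_swap_fin_two x y G).trans hG⟩,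
    x, hF, hG⟩

theorem coprime_polynomials_finite_common_zeros {k : Type*} [Field k]
    (F G : MvPolynomial (Fin 2) k) (hF : F ≠ 0) (hG : G ≠ 0)
    (hcop : ∀ d : MvPolynomial (Fin 2) k, d ∣ F → d ∣ G → IsUnit d) :
    {p : k × k | eval ![p.1, p.2] F = 0 ∧ eval ![p.1, p.2] G = 0}.Finite :=
  coprime_polynomials_finite_common_zeros_general F G hcop
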